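/- arXiv:1812.01086 — 2 statements merged into one kernel-verified Lean document; each statement's English description precedes it below -/
import Mathlib

section
/- A node i of X is a flattening point (i.e., Δ(i-1/2)·Δ(i+1/2) < 0) if and only if λ'(i-1/2)·λ'(i+1/2) < 0, where λ = λ(X,U) for any transversal parallel vector field U along X. -/
/-!
Solving the osculation condition for `λ` gives `λ(j) α(j) = -[E(j), E(j-1), U(j)]` with
`E(j) = X(j+1) - X(j)`. Taking the difference of two consecutive values, the parallel term
`-b E(j)` of `U(j+1) - U(j)` drops out, and a four-vector identity in `ℝ³` turns the numerator
into `Δ(j+1/2) β(j+1/2)`: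
`λ'(j+1/2) = Δ(j+1/2) β(j+1/2) / (α(j) α(j+1))`.
Since `α` and `β` are positive, `λ'(i-1/2) λ'(i+1/2)` and `Δ(i-1/2) Δ(i+1/2)` have the same sign.
-/

noncomputable def det3 (a b c : Fin 3 → ℝ) : ℝ := Matrix.det (Matrix.of ![a, b, c])

lemma det3_eq (a b c : Fin 3 → ℝ) : det3 a b c =
    a 0 * b 1 * c 2 - a 0 * b 2 * c 1 - a 1 * b 0 * c 2 + a 1 * b 2 * c 0
    + a 2 * b 0 * c 1 - a 2 * b 1 * c 0 := by
  simp [det3, Matrix.det_fin_three]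

lemma det3_osculating (p q r u : Fin 3 → ℝ) (l : ℝ) :
    det3 (r - q) (r - 2 • q + p) (-l • q + u) = -(l * det3 p q r + det3 (r - q) (q - p) u) := by
  simp only [det3_eq, Pi.sub_apply, Pi.add_apply, Pi.smul_apply, smul_eq_mul]
  ring

lemma det3_sub_add_smul_sub (p q r : Fin 3 → ℝ) (c : ℝ) (u : Fin 3 → ℝ) :
    det3 (r - q) (q - p) (c • (q - p) + u) = det3 (r - q) (q - p) u := by
  simp only [det3_eq, Pi.sub_apply, Pi.add_apply, Pi.smul_apply, smul_eq_mul]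
  ring

lemma det3_mul_det3_sub_det3_mul_det3 (p q r s u : Fin 3 → ℝ) :
    det3 (r - q) (q - p) u * det3 q r s - det3 (s - r) (r - q) u * det3 p q r =
      det3 (s - r) (r - q) (q - p) * det3 q r u := by
  simp only [det3_eq, Pi.sub_apply]
  ring

lemma mul_mul_mul_neg_iff_of_pos {R : Type*} [CommRing R] [LinearOrder R] [IsStrictOrderedRing R]
    {a b c d : R} (hc : 0 < c) (hd : 0 < d) : a * c * (b * d) < 0 ↔ a * b < 0 := by
  rw [mul_mul_mul_comm]
  simpa using mul_lt_mul_iff_of_pos_right (b := a * b) (c := 0) (mul_pos hc hd)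

section DiscreteCurve

variable {X U : ℤ → Fin 3 → ℝ} {b lam : ℤ → ℝ}

lemma lam_eq_of_osculating {j : ℤ} (hα : det3 (X (j - 1)) (X j) (X (j + 1)) ≠ 0)
    (hosc : det3 (X (j + 1) - X j) (X (j + 1) - 2 • X j + X (j - 1)) (-lam j • X j + U j) = 0) :
    lam j = -det3 (X (j + 1) - X j) (X j - X (j - 1)) (U j) / det3 (X (j - 1)) (X j) (X (j + 1)) := by
  rw [det3_osculating, neg_eq_zero, add_eq_zero_iff_eq_neg] at hosc
  rw [eq_div_iff hα, hosc]

lemma lam_succ_sub_lam (hconv : ∀ j, det3 (X (j - 1)) (X j) (X (j + 1)) ≠ 0)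
    (hpar : ∀ j, U (j + 1) - U j = -b j • (X (j + 1) - X j))
    (hosc : ∀ j, det3 (X (j + 1) - X j) (X (j + 1) - 2 • X j + X (j - 1))
        (-lam j • X j + U j) = 0) (j : ℤ) :
    lam (j + 1) - lam j =
      det3 (X (j + 2) - X (j + 1)) (X (j + 1) - X j) (X j - X (j - 1)) *
          det3 (X j) (X (j + 1)) (U j) /
        (det3 (X (j - 1)) (X j) (X (j + 1)) * det3 (X j) (X (j + 1)) (X (j + 2))) := by
  have hα₀ := hconv j
  have hα₁ : det3 (X j) (X (j + 1)) (X (j + 2)) ≠ 0 := by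
    simpa only [add_sub_cancel_right, add_assoc, one_add_one_eq_two] using hconv (j + 1)
  have hlam₁ := lam_eq_of_osculating (hconv (j + 1)) (hosc (j + 1))
  have hU : U (j + 1) = -b j • (X (j + 1) - X j) + U j := eq_add_of_sub_eq (hpar j)
  simp only [add_sub_cancel_right, add_assoc, one_add_one_eq_two, hU,
    det3_sub_add_smul_sub] at hlam₁
  rw [hlam₁, lam_eq_of_osculating hα₀ (hosc j), ← det3_mul_det3_sub_det3_mul_det3]
  field_simp
  ring

end DiscreteCurve

/-- node i is a flattening point iff λ'(i-1/2)·λ'(i+1/2) < 0. -/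
theorem flattening_iff_lambda'_sign_change
    (X U : ℤ → Fin 3 → ℝ) (b lam : ℤ → ℝ)
    (hconv : ∀ j, 0 < det3 (X (j - 1)) (X j) (X (j + 1)))
    (htrans : ∀ j, 0 < det3 (X j) (X (j + 1)) (U j))
    (hpar : ∀ j, U (j + 1) - U j = -b j • (X (j + 1) - X j))
    (hosc : ∀ j, det3 (X (j + 1) - X j) (X (j + 1) - 2 • X j + X (j - 1))
        (-lam j • X j + U j) = 0)
    (i : ℤ) :
    det3 (X (i + 1) - X i) (X i - X (i - 1)) (X (i - 1) - X (i - 2)) *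
        det3 (X (i + 2) - X (i + 1)) (X (i + 1) - X i) (X i - X (i - 1)) < 0 ↔
      (lam i - lam (i - 1)) * (lam (i + 1) - lam i) < 0 := by
  have hlam' := lam_succ_sub_lam (fun j => (hconv j).ne') hpar hosc
  have hprev := hlam' (i - 1)
  have hα_prev := hconv (i - 1)
  have hβ_prev := htrans (i - 1)
  have hα_next := hconv (i + 1)
  have hshift : i - 1 + 2 = i + 1 := by ring
  simp only [sub_add_cancel, sub_sub, hshift, one_add_one_eq_two, add_sub_cancel_right,
    add_assoc] at hprev hα_prev hβ_prev hα_next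
  have hk_prev := div_pos hβ_prev (mul_pos hα_prev (hconv i))
  have hk_next := div_pos (htrans i) (mul_pos (hconv i) hα_next)
  rw [hprev, hlam' i, mul_div_assoc, mul_div_assoc, mul_mul_mul_neg_iff_of_pos hk_prev hk_next]
end

section
/- The dual pair satisfies β(Y,V)(i) = α(i)/(β(i-1/2)β(i+1/2)), where β(Y,V)(i) = [Y(i-1/2), Y(i+1/2), V(i+1/2)], α(i) = [X(i-1), X(i), X(i+1)], and β(i+1/2) = [X(i), X(i+1), U(i)]. -/
open Matrix

/-!
Pairing the rows `Y(i-1), Y(i), V(i)` against `X(i-1), X(i), X(i+1)` gives an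
anti-triangular Gram matrix, because `Y(j)` kills `X(j)` and `X(j+1)`; hence
`β(Y,V)(i) · α(i) = (Y(i-1) ⬝ X(i+1)) (Y(i) ⬝ X(i-1))`. By Cramer's rule each factor
on the right is `α(i) / β(i∓1/2)`, and dividing by `α(i) ≠ 0` gives the formula.
-/

lemma det3_cyclic (a b c : Fin 3 → ℝ) : det3 b c a = det3 a b c := by
  simp [det3, det_fin_three]
  ring

lemma det3_mul_det3 (u v w a b c : Fin 3 → ℝ) :
    det3 u v w * det3 a b c =
      det3 ![u ⬝ᵥ a, u ⬝ᵥ b, u ⬝ᵥ c] ![v ⬝ᵥ a, v ⬝ᵥ b, v ⬝ᵥ c]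
        ![w ⬝ᵥ a, w ⬝ᵥ b, w ⬝ᵥ c] := by
  simp [det3, det_fin_three, dotProduct, Fin.sum_univ_three]
  ring

/-- Four vectors of `ℝ³` are linearly dependent, with the `3 × 3` minors as coefficients. -/
lemma det3_mul_dotProduct (w a b c d : Fin 3 → ℝ) :
    det3 a b c * (w ⬝ᵥ d) =
      det3 b c d * (w ⬝ᵥ a) - det3 a c d * (w ⬝ᵥ b) + det3 a b d * (w ⬝ᵥ c) := by
  simp [det3, det_fin_three, dotProduct, Fin.sum_univ_three]
  ring

lemma det3_mul_dotProduct_of_dual {w p q u : Fin 3 → ℝ} (hp : w ⬝ᵥ p = 0) (hq : w ⬝ᵥ q = 0)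
    (hu : w ⬝ᵥ u = 1) (r : Fin 3 → ℝ) : det3 p q u * (w ⬝ᵥ r) = det3 p q r := by
  rw [det3_mul_dotProduct, hp, hq, hu]
  ring

lemma det3_antitriangular (s t x y : ℝ) : det3 ![0, 0, s] ![t, 0, 0] ![x, 1, y] = s * t := by
  simp [det3, det_fin_three]

lemma dotProduct_eq_of_dotProduct_sub_eq_zero {m R : Type*} [Fintype m] [CommRing R]
    {w x y : m → R} (h : w ⬝ᵥ (x - y) = 0) :
    w ⬝ᵥ x = w ⬝ᵥ y := by
  rwa [dotProduct_sub, sub_eq_zero] at h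

lemma det3_dual_mul_det3_mul_det3 {x₀ x₁ x₂ u₀ u₁ y₀ y₁ v : Fin 3 → ℝ}
    (hα : det3 x₀ x₁ x₂ ≠ 0)
    (hy₀x₀ : y₀ ⬝ᵥ x₀ = 0) (hy₀x₁ : y₀ ⬝ᵥ x₁ = 0) (hy₀u₀ : y₀ ⬝ᵥ u₀ = 1)
    (hy₁x₁ : y₁ ⬝ᵥ x₁ = 0) (hy₁x₂ : y₁ ⬝ᵥ x₂ = 0) (hy₁u₁ : y₁ ⬝ᵥ u₁ = 1)
    (hvx₁ : v ⬝ᵥ x₁ = 1) (hvx₂ : v ⬝ᵥ x₂ = 1) :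
    det3 y₀ y₁ v * (det3 x₀ x₁ u₀ * det3 x₁ x₂ u₁) = det3 x₀ x₁ x₂ := by
  have hy₀x₂ : det3 x₀ x₁ u₀ * (y₀ ⬝ᵥ x₂) = det3 x₀ x₁ x₂ :=
    det3_mul_dotProduct_of_dual hy₀x₀ hy₀x₁ hy₀u₀ x₂
  have hy₁x₀ : det3 x₁ x₂ u₁ * (y₁ ⬝ᵥ x₀) = det3 x₀ x₁ x₂ := by
    rw [det3_mul_dotProduct_of_dual hy₁x₁ hy₁x₂ hy₁u₁ x₀, det3_cyclic]
  have hgram : det3 y₀ y₁ v * det3 x₀ x₁ x₂ = (y₀ ⬝ᵥ x₂) * (y₁ ⬝ᵥ x₀) := by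
    rw [det3_mul_det3, hy₀x₀, hy₀x₁, hy₁x₁, hy₁x₂, hvx₁, hvx₂, det3_antitriangular]
  refine mul_right_cancel₀ hα ?_
  linear_combination (det3 x₀ x₁ u₀ * det3 x₁ x₂ u₁) * hgram
    + (det3 x₁ x₂ u₁ * (y₁ ⬝ᵥ x₀)) * hy₀x₂ + det3 x₀ x₁ x₂ * hy₁x₀

theorem dual_beta_formula_general
    (X U Y V : ℤ → Fin 3 → ℝ)
    (hconv : ∀ j, 0 < det3 (X (j - 1)) (X j) (X (j + 1)))
    (hY1 : ∀ j, Y j ⬝ᵥ (X (j + 1) - X j) = 0)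
    (hY2 : ∀ j, Y j ⬝ᵥ U j = 1)
    (hY3 : ∀ j, Y j ⬝ᵥ X j = 0)
    (hV1 : ∀ j, V j ⬝ᵥ (X (j + 1) - X j) = 0)
    (hV3 : ∀ j, V j ⬝ᵥ X j = 1)
    (i : ℤ) :
    det3 (Y (i - 1)) (Y i) (V i) =
      det3 (X (i - 1)) (X i) (X (i + 1)) /
        (det3 (X (i - 1)) (X i) (U (i - 1)) * det3 (X i) (X (i + 1)) (U i)) := by
  have hY1' : Y (i - 1) ⬝ᵥ X i = 0 := by
    have h := dotProduct_eq_of_dotProduct_sub_eq_zero (hY1 (i - 1))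
    rwa [sub_add_cancel, hY3] at h
  have key := det3_dual_mul_det3_mul_det3 (hconv i).ne' (hY3 (i - 1)) hY1' (hY2 (i - 1))
    (hY3 i) ((dotProduct_eq_of_dotProduct_sub_eq_zero (hY1 i)).trans (hY3 i)) (hY2 i)
    (hV3 i) ((dotProduct_eq_of_dotProduct_sub_eq_zero (hV1 i)).trans (hV3 i))
  exact eq_div_of_mul_eq (right_ne_zero_of_mul (key ▸ (hconv i).ne')) key

/-- β(Y,V)(i) = α(i) / (β(i-1/2) β(i+1/2)). -/
theorem dual_beta_formula
    (X U Y V : ℤ → Fin 3 → ℝ) (b : ℤ → ℝ)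
    (hconv : ∀ j, 0 < det3 (X (j - 1)) (X j) (X (j + 1)))
    (htrans : ∀ j, 0 < det3 (X j) (X (j + 1)) (U j))
    (hpar : ∀ j, U (j + 1) - U j = -b j • (X (j + 1) - X j))
    (hY1 : ∀ j, Y j ⬝ᵥ (X (j + 1) - X j) = 0)
    (hY2 : ∀ j, Y j ⬝ᵥ U j = 1)
    (hY3 : ∀ j, Y j ⬝ᵥ X j = 0)
    (hV1 : ∀ j, V j ⬝ᵥ (X (j + 1) - X j) = 0)
    (hV2 : ∀ j, V j ⬝ᵥ U j = 0)
    (hV3 : ∀ j, V j ⬝ᵥ X j = 1)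
    (i : ℤ) :
    det3 (Y (i - 1)) (Y i) (V i) =
      det3 (X (i - 1)) (X i) (X (i + 1)) /
        (det3 (X (i - 1)) (X i) (U (i - 1)) * det3 (X i) (X (i + 1)) (U i)) :=
  dual_beta_formula_general X U Y V hconv hY1 hY2 hY3 hV1 hV3 i
end
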